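/- Let R be a commutative F_p-algebra, λ ∈ R, A = R[X,Y]/(X^p,Y^p) with the Hopf structure Δ(X)=X⊗1+(1+λX)⊗X, Δ(Y)=Y⊗1+(1+λX)⊗Y. Order the monomial basis e_{1+r₁+p·r₂} = X^{r₁}Y^{r₂} (0 ≤ r₁,r₂ ≤ p−1). Then the matrix of right multiplication operators in the regular representation (defined by Δ(e_j) = Σ_i e_i ⊗ R_{ij}) is upper triangular with i-th diagonal entry Σ_{k=0}^{r} C(r,k) λ^k X^k, where r ≡ i−1 (mod p), 0 ≤ r ≤ p−1. In particular, its determinant equals Π_{r=0}^{p−1} (Σ_{k=0}^{r} C(r,k) λ^k X^k)^p = Π_{r=0}^{p−1} ((1+λX)^r)^p. -/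

import Mathlib

/-!
Write `u = 1 + λX`. Since `Δ` is multiplicative and `Δ X = X ⊗ 1 + u ⊗ X`, `Δ Y = Y ⊗ 1 + u ⊗ Y`,
`Δ (X^a Y^b) = Σ_{s,t} C(a,s) C(b,t) u^{s+t} X^{a-s} Y^{b-t} ⊗ X^s Y^t`,
so the entry `R_{ij}` with `i = (r₁, r₂)`, `j = (a, b)` is obtained by taking the coefficient of
`X^{r₁} Y^{r₂}` in the left factors: only `b - t = r₂` contributes, with coefficient
`C(s+t, r₁-a+s) λ^{r₁-a+s}`. If `j` precedes `i`, then `a + p t < r₁`, so this binomial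
coefficient vanishes; on the diagonal only `t = 0` survives and gives `Σ_s C(r₁,s) λ^s X^s = u^{r₁}`.
The matrix being triangular, its determinant is the product of the diagonal, in which every `r₁`
occurs for the `p` values of `r₂`.
-/

open scoped TensorProduct

noncomputable section

/-- The Hopf algebra `A = R[X,Y]/(X^p, Y^p)` of `G^{(λ)}_R`. -/
abbrev Aq (p : ℕ) (R : Type*) [CommRing R] : Type _ :=
  MvPolynomial (Fin 2) R ⧸
    Ideal.span ({MvPolynomial.X 0 ^ p, MvPolynomial.X 1 ^ p} :
      Set (MvPolynomial (Fin 2) R))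

/-- The class of `X` in `A`. -/
def aX (p : ℕ) (R : Type*) [CommRing R] : Aq p R :=
  Ideal.Quotient.mk _ (MvPolynomial.X 0)

/-- The class of `Y` in `A`. -/
def aY (p : ℕ) (R : Type*) [CommRing R] : Aq p R :=
  Ideal.Quotient.mk _ (MvPolynomial.X 1)

/-- The basis monomial `e_{1+r₁+p·r₂} = X^{r₁}Y^{r₂}` of `A`. -/
def eMon (p : ℕ) (R : Type*) [CommRing R] (r : Fin p × Fin p) : Aq p R :=
  aX p R ^ (r.1 : ℕ) * aY p R ^ (r.2 : ℕ)

theorem Matrix.det_eq_prod_diag_of_lt_imp_eq_zero {n ι S : Type*} [Fintype n] [DecidableEq n]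
    [Fintype ι] [DecidableEq ι] [LinearOrder ι] [CommRing S] (M : Matrix n n S) (e : n ≃ ι)
    (h : ∀ i j, e j < e i → M i j = 0) : M.det = ∏ i, M i i := by
  have htri : (Matrix.reindex e e M).IsUpperTriangular := fun x y hxy => by
    simpa using h (e.symm x) (e.symm y) (by simpa using hxy)
  rw [← Matrix.det_reindex_self e M, Matrix.det_of_isUpperTriangular htri,
    ← e.prod_comp]
  simp

theorem TensorProduct.lid_rTensor_sum_tmul {R A B ι : Type*} [CommRing R] [AddCommGroup A]
    [Module R A] [AddCommGroup B] [Module R B] [Fintype ι] [DecidableEq ι]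
    (e : ι → A) (c : ι → A →ₗ[R] R) (hc : ∀ i k, c i (e k) = if k = i then 1 else 0)
    (m : ι → B) (i : ι) :
    TensorProduct.lid R B (LinearMap.rTensor B (c i) (∑ k, e k ⊗ₜ m k)) = m i := by
  simp [hc]

section Expansion

variable {R A : Type*} [CommRing R] [CommRing A] [Algebra R A]

theorem one_add_algebraMap_mul_pow (lam : R) (x : A) (n : ℕ) :
    (1 + algebraMap R A lam * x) ^ n =
      ∑ k ∈ Finset.range (n + 1), algebraMap R A ((n.choose k : R) * lam ^ k) * x ^ k := by
  rw [add_comm, add_pow]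
  refine Finset.sum_congr rfl fun k _ => ?_
  simp only [one_pow, mul_one, mul_pow, map_mul, map_natCast, map_pow]
  ring

theorem tmul_one_add_tmul_pow (x u : A) (a : ℕ) :
    (x ⊗ₜ[R] 1 + u ⊗ₜ[R] x) ^ a =
      ∑ s ∈ Finset.range (a + 1), a.choose s • ((u ^ s * x ^ (a - s)) ⊗ₜ[R] (x ^ s)) := by
  rw [add_comm, add_pow]
  refine Finset.sum_congr rfl fun s _ => ?_
  rw [Algebra.TensorProduct.tmul_pow, Algebra.TensorProduct.tmul_pow,
    Algebra.TensorProduct.tmul_mul_tmul, one_pow, mul_one, nsmul_eq_mul, mul_comm]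

theorem map_pow_mul_pow_of_skew_primitive (Δ : A →ₐ[R] A ⊗[R] A) {x y u : A}
    (hx : Δ x = x ⊗ₜ 1 + u ⊗ₜ x) (hy : Δ y = y ⊗ₜ 1 + u ⊗ₜ y) (a b : ℕ) :
    Δ (x ^ a * y ^ b) =
      ∑ s ∈ Finset.range (a + 1), ∑ t ∈ Finset.range (b + 1), (a.choose s * b.choose t) •
        ((u ^ (s + t) * x ^ (a - s) * y ^ (b - t)) ⊗ₜ[R] (x ^ s * y ^ t)) := by
  rw [map_mul, map_pow, map_pow, hx, hy, tmul_one_add_tmul_pow, tmul_one_add_tmul_pow,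
    Finset.sum_mul_sum]
  refine Finset.sum_congr rfl fun s _ => Finset.sum_congr rfl fun t _ => ?_
  rw [smul_mul_smul_comm, Algebra.TensorProduct.tmul_mul_tmul, pow_add, mul_mul_mul_comm,
    ← mul_assoc]

end Expansion

namespace Aq

variable {p : ℕ} {R : Type*} [CommRing R]

def expXY (m n : ℕ) : Fin 2 →₀ ℕ := Finsupp.single 0 m + Finsupp.single 1 n

theorem expXY_inj {m n m' n' : ℕ} : expXY m n = expXY m' n' ↔ m = m' ∧ n = n' := by
  refine ⟨fun h => ⟨?_, ?_⟩, fun ⟨hm, hn⟩ => hm ▸ hn ▸ rfl⟩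
  · simpa [expXY] using DFunLike.congr_fun h 0
  · simpa [expXY] using DFunLike.congr_fun h 1

theorem X_pow_mul_X_pow (m n : ℕ) :
    (MvPolynomial.X 0 ^ m * MvPolynomial.X 1 ^ n : MvPolynomial (Fin 2) R) =
      MvPolynomial.monomial (expXY m n) 1 := by
  rw [MvPolynomial.X_pow_eq_monomial, MvPolynomial.X_pow_eq_monomial,
    MvPolynomial.monomial_mul, one_mul, expXY]

theorem coeff_expXY_eq_zero_of_mem {m n : ℕ} (hm : m < p) (hn : n < p)
    {f : MvPolynomial (Fin 2) R}
    (hf : f ∈ Ideal.span ({MvPolynomial.X 0 ^ p, MvPolynomial.X 1 ^ p} :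
      Set (MvPolynomial (Fin 2) R))) :
    f.coeff (expXY m n) = 0 := by
  rw [MvPolynomial.X_pow_eq_monomial, MvPolynomial.X_pow_eq_monomial,
    ← Set.image_pair (fun s => MvPolynomial.monomial s (1 : R)),
    MvPolynomial.mem_ideal_span_monomial_image] at hf
  by_contra h
  obtain ⟨s, hs, hle⟩ := hf _ (MvPolynomial.mem_support_iff.mpr h)
  rcases hs with rfl | rfl
  · have := hle 0
    simp [expXY] at this
    omega
  · have := hle 1
    simp [expXY] at this
    omega

/-- The coordinate dual to `eMon p R i`: the coefficient of `X^{i.1} Y^{i.2}`. -/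
def coord (i : Fin p × Fin p) : Aq p R →ₗ[R] R :=
  let I : Ideal (MvPolynomial (Fin 2) R) :=
    Ideal.span {MvPolynomial.X 0 ^ p, MvPolynomial.X 1 ^ p}
  Submodule.liftQ (I.restrictScalars R) (MvPolynomial.lcoeff R (expXY i.1 i.2))
      (fun _ hf => coeff_expXY_eq_zero_of_mem i.1.isLt i.2.isLt hf) ∘ₗ
    (Submodule.Quotient.restrictScalarsEquiv R I).symm.toLinearMap

theorem coord_mk (i : Fin p × Fin p) (f : MvPolynomial (Fin 2) R) :
    coord i (Ideal.Quotient.mk _ f : Aq p R) = f.coeff (expXY i.1 i.2) :=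
  rfl

theorem coord_aX_pow_mul_aY_pow (i : Fin p × Fin p) (m n : ℕ) :
    coord i (aX p R ^ m * aY p R ^ n) = if m = i.1 ∧ n = i.2 then 1 else 0 := by
  rw [aX, aY, ← map_pow, ← map_pow, ← map_mul, coord_mk, X_pow_mul_X_pow,
    MvPolynomial.coeff_monomial]
  simp only [expXY_inj]

theorem coord_eMon (i k : Fin p × Fin p) :
    coord i (eMon p R k) = if k = i then 1 else 0 := by
  simp only [eMon, coord_aX_pow_mul_aY_pow, Fin.val_inj, Prod.ext_iff]

theorem coord_one_add_mul_pow_mul (lam : R) (i : Fin p × Fin p) (n c d : ℕ) :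
    coord i ((1 + algebraMap R (Aq p R) lam * aX p R) ^ n * aX p R ^ c * aY p R ^ d) =
      if c ≤ i.1 ∧ d = i.2 then (n.choose (i.1 - c) : R) * lam ^ (i.1 - c) else 0 := by
  rw [one_add_algebraMap_mul_pow, Finset.sum_mul, Finset.sum_mul, map_sum]
  simp only [← Algebra.smul_def, smul_mul_assoc, map_smul, ← pow_add, coord_aX_pow_mul_aY_pow,
    smul_eq_mul, mul_ite, mul_one, mul_zero]
  by_cases hd : d = i.2
  · subst hd
    by_cases hc : c ≤ i.1
    · have hk : ∀ k, k + c = i.1 ↔ k = i.1 - c := by omega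
      simp only [and_true, hk, Finset.sum_ite_eq', Finset.mem_range, hc, if_true]
      split_ifs with hlt
      · rfl
      · rw [Nat.choose_eq_zero_of_lt (by omega), Nat.cast_zero, zero_mul]
    · simp [hc, show ∀ k, k + c ≠ i.1 by omega]
  · simp [hd]

section Coproduct

variable {lam : R} {Δ : Aq p R →ₐ[R] Aq p R ⊗[R] Aq p R}
  {M : Matrix (Fin p × Fin p) (Fin p × Fin p) (Aq p R)}

theorem matrix_apply_eq_sum
    (hΔX : Δ (aX p R) = aX p R ⊗ₜ 1 + (1 + algebraMap R (Aq p R) lam * aX p R) ⊗ₜ aX p R)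
    (hΔY : Δ (aY p R) = aY p R ⊗ₜ 1 + (1 + algebraMap R (Aq p R) lam * aX p R) ⊗ₜ aY p R)
    (hM : ∀ j, Δ (eMon p R j) = ∑ i, eMon p R i ⊗ₜ[R] M i j) (i j : Fin p × Fin p) :
    M i j = ∑ s ∈ Finset.range (j.1 + 1), ∑ t ∈ Finset.range (j.2 + 1),
      ((j.1 : ℕ).choose s * (j.2 : ℕ).choose t) •
        coord i ((1 + algebraMap R (Aq p R) lam * aX p R) ^ (s + t) *
          aX p R ^ (j.1 - s) * aY p R ^ (j.2 - t)) • (aX p R ^ s * aY p R ^ t) := by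
  rw [← TensorProduct.lid_rTensor_sum_tmul (eMon p R) coord coord_eMon (fun k => M k j) i,
    ← hM, eMon, map_pow_mul_pow_of_skew_primitive Δ hΔX hΔY]
  simp only [map_sum, map_nsmul, LinearMap.rTensor_tmul, TensorProduct.lid_tmul]

theorem matrix_apply_eq_zero_of_lt
    (hΔX : Δ (aX p R) = aX p R ⊗ₜ 1 + (1 + algebraMap R (Aq p R) lam * aX p R) ⊗ₜ aX p R)
    (hΔY : Δ (aY p R) = aY p R ⊗ₜ 1 + (1 + algebraMap R (Aq p R) lam * aX p R) ⊗ₜ aY p R)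
    (hM : ∀ j, Δ (eMon p R j) = ∑ i, eMon p R i ⊗ₜ[R] M i j) (i j : Fin p × Fin p)
    (hij : (j.1 : ℕ) + p * j.2 < i.1 + p * i.2) : M i j = 0 := by
  rw [matrix_apply_eq_sum hΔX hΔY hM]
  refine Finset.sum_eq_zero fun s hs => Finset.sum_eq_zero fun t ht => ?_
  rw [coord_one_add_mul_pow_mul]
  split_ifs with h
  · rw [Finset.mem_range] at hs ht
    have hpt : t ≤ p * t := Nat.le_mul_of_pos_left t i.1.pos
    have hj2 : p * j.2 = p * i.2 + p * t := by rw [← mul_add]; congr 1; omega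
    rw [Nat.choose_eq_zero_of_lt (show s + t < i.1 - (j.1 - s) by omega), Nat.cast_zero,
      zero_mul, zero_smul, smul_zero]
  · rw [zero_smul, smul_zero]

theorem matrix_apply_self
    (hΔX : Δ (aX p R) = aX p R ⊗ₜ 1 + (1 + algebraMap R (Aq p R) lam * aX p R) ⊗ₜ aX p R)
    (hΔY : Δ (aY p R) = aY p R ⊗ₜ 1 + (1 + algebraMap R (Aq p R) lam * aX p R) ⊗ₜ aY p R)
    (hM : ∀ j, Δ (eMon p R j) = ∑ i, eMon p R i ⊗ₜ[R] M i j) (i : Fin p × Fin p) :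
    M i i = ∑ k ∈ Finset.range (i.1 + 1),
      algebraMap R (Aq p R) (((i.1 : ℕ).choose k : R) * lam ^ k) * aX p R ^ k := by
  rw [matrix_apply_eq_sum hΔX hΔY hM]
  refine Finset.sum_congr rfl fun s hs => ?_
  rw [Finset.sum_eq_single_of_mem 0 (by simp)]
  · rw [coord_one_add_mul_pow_mul, if_pos ⟨Nat.sub_le _ _, Nat.sub_zero _⟩,
      Nat.sub_sub_self (Finset.mem_range_succ_iff.mp hs)]
    simp only [add_zero, Nat.choose_self, Nat.choose_zero_right, Nat.cast_one, one_mul, mul_one,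
      pow_zero, ← Nat.cast_smul_eq_nsmul R, smul_smul, ← Algebra.smul_def]
  · intro t ht ht0
    rw [Finset.mem_range] at ht
    rw [coord_one_add_mul_pow_mul, if_neg (by omega), zero_smul, smul_zero]

end Coproduct

end Aq

theorem stmt9_general (p : ℕ) (R : Type*) [CommRing R] (lam : R)
    (Δ : Aq p R →ₐ[R] Aq p R ⊗[R] Aq p R)
    (hΔX : Δ (aX p R) = aX p R ⊗ₜ 1 +
      (1 + algebraMap R (Aq p R) lam * aX p R) ⊗ₜ aX p R)
    (hΔY : Δ (aY p R) = aY p R ⊗ₜ 1 +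
      (1 + algebraMap R (Aq p R) lam * aX p R) ⊗ₜ aY p R)
    (M : Matrix (Fin p × Fin p) (Fin p × Fin p) (Aq p R))
    (hM : ∀ j, Δ (eMon p R j) = ∑ i, eMon p R i ⊗ₜ[R] M i j) :
    -- upper triangular w.r.t. the ordering `i ↦ 1 + r₁ + p·r₂`
    (∀ i j : Fin p × Fin p, (j.1 : ℕ) + p * (j.2 : ℕ) < (i.1 : ℕ) + p * (i.2 : ℕ) →
      M i j = 0) ∧
    -- diagonal entries
    (∀ i : Fin p × Fin p, M i i =
      ∑ k ∈ Finset.range ((i.1 : ℕ) + 1),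
        algebraMap R (Aq p R) ((((i.1 : ℕ).choose k : ℕ) : R) * lam ^ k) *
          aX p R ^ k) ∧
    -- the determinant
    M.det = ∏ r ∈ Finset.range p,
      (∑ k ∈ Finset.range (r + 1),
        algebraMap R (Aq p R) (((r.choose k : ℕ) : R) * lam ^ k) * aX p R ^ k) ^ p ∧
    M.det = ∏ r ∈ Finset.range p,
      ((1 + algebraMap R (Aq p R) lam * aX p R) ^ r) ^ p := by
  have hupper := Aq.matrix_apply_eq_zero_of_lt hΔX hΔY hM
  have hdiag := Aq.matrix_apply_self hΔX hΔY hM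
  have hdet : M.det = ∏ r ∈ Finset.range p, (∑ k ∈ Finset.range (r + 1),
      algebraMap R (Aq p R) (((r.choose k : ℕ) : R) * lam ^ k) * aX p R ^ k) ^ p := by
    rw [M.det_eq_prod_diag_of_lt_imp_eq_zero ((Equiv.prodComm _ _).trans finProdFinEquiv) hupper,
      Fintype.prod_prod_type]
    simp only [hdiag, Finset.prod_const, Finset.card_univ, Fintype.card_fin]
    rw [Finset.prod_range]
  refine ⟨hupper, hdiag, hdet, ?_⟩
  simp only [hdet, one_add_algebraMap_mul_pow]

/-- the matrix of the right regular representation of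
`A = R[X,Y]/(X^p,Y^p)` with respect to the ordered monomial basis
`e_{1+r₁+p·r₂} = X^{r₁}Y^{r₂}` is upper triangular with diagonal entries
`Σ_{k=0}^{r} C(r,k)λ^k X^k` (`r ≡ i-1 mod p`), and its determinant equals
`Π_{r=0}^{p-1}(Σ_{k=0}^{r} C(r,k)λ^k X^k)^p = Π_{r=0}^{p-1}((1+λX)^r)^p`. -/
theorem stmt9 (p : ℕ) (hp : p.Prime) (R : Type*) [CommRing R] [CharP R p] (lam : R)
    (Δ : Aq p R →ₐ[R] Aq p R ⊗[R] Aq p R)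
    (hΔX : Δ (aX p R) = aX p R ⊗ₜ 1 +
      (1 + algebraMap R (Aq p R) lam * aX p R) ⊗ₜ aX p R)
    (hΔY : Δ (aY p R) = aY p R ⊗ₜ 1 +
      (1 + algebraMap R (Aq p R) lam * aX p R) ⊗ₜ aY p R)
    (M : Matrix (Fin p × Fin p) (Fin p × Fin p) (Aq p R))
    (hM : ∀ j, Δ (eMon p R j) = ∑ i, eMon p R i ⊗ₜ[R] M i j) :
    -- upper triangular w.r.t. the ordering `i ↦ 1 + r₁ + p·r₂`
    (∀ i j : Fin p × Fin p, (j.1 : ℕ) + p * (j.2 : ℕ) < (i.1 : ℕ) + p * (i.2 : ℕ) →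
      M i j = 0) ∧
    -- diagonal entries
    (∀ i : Fin p × Fin p, M i i =
      ∑ k ∈ Finset.range ((i.1 : ℕ) + 1),
        algebraMap R (Aq p R) ((((i.1 : ℕ).choose k : ℕ) : R) * lam ^ k) *
          aX p R ^ k) ∧
    -- the determinant
    M.det = ∏ r ∈ Finset.range p,
      (∑ k ∈ Finset.range (r + 1),
        algebraMap R (Aq p R) (((r.choose k : ℕ) : R) * lam ^ k) * aX p R ^ k) ^ p ∧
    M.det = ∏ r ∈ Finset.range p,
      ((1 + algebraMap R (Aq p R) lam * aX p R) ^ r) ^ p :=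
  stmt9_general p R lam Δ hΔX hΔY M hM
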